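/- Let w : ℝ^d → ℝ^d be a C¹ vector field, h(x) = x φ(|x|) with φ as above (φ ≥ 0, φ' ≤ 0 a.e.). Then ∑_{i,j,k} ∫_{ℝ^d} ∂_j w^k(x) ∂_j h^i(x) ∂_i w^k(x) dx ≥ ∫_{ℝ^d} (φ(|x|) + |x| φ'(|x|)) |∇w(x)|² dx, provided w has enough decay for the integrals to converge. -/

import Mathlib

open MeasureTheory

/-- Spatial partial derivative `∂_l f` of a scalar function on `ℝ^d`. -/
noncomputable def pd {d : ℕ} (l : Fin d) (f : EuclideanSpace ℝ (Fin d) → ℝ)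
    (x : EuclideanSpace ℝ (Fin d)) : ℝ :=
  fderiv ℝ f x (EuclideanSpace.single l 1)

/-- The radial cutoff `φ(r) = b₀` for `r ≤ R/λ`, `φ(r) = b₀R/(λr)` for `r > R/λ`. -/
noncomputable def phi (b₀ R lam r : ℝ) : ℝ :=
  if r ≤ R / lam then b₀ else b₀ * R / (lam * r)

/-- The radial vector field `h(x) = x φ(|x|)`. -/
noncomputable def hvec (d : ℕ) (b₀ R lam : ℝ) (x : EuclideanSpace ℝ (Fin d)) :
    EuclideanSpace ℝ (Fin d) :=
  phi b₀ R lam ‖x‖ • x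

/-!
Off the null set `{x = 0} ∪ {‖x‖ = R/λ}` the profile `φ` is differentiable at `‖x‖` with
`φ' ≤ 0`, and the radial field `h(x) = φ(‖x‖) x` has `∂_j h^i = φ δ_ij + (φ'/‖x‖) x_i x_j`.
The right-hand integrand is then `φ |∇w|² + (φ'/‖x‖) ∑_k (x · ∇w^k)²`, and Cauchy–Schwarz,
`(x · ∇w^k)² ≤ ‖x‖² |∇w^k|²`, together with `φ' ≤ 0` bounds it below pointwise by the left one.
-/

section InnerProductSpace

variable {E : Type*} [NormedAddCommGroup E] [InnerProductSpace ℝ E]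

theorem hasFDerivAt_norm {x : E} (hx : x ≠ 0) :
    HasFDerivAt (fun y : E => ‖y‖) (‖x‖⁻¹ • innerSL ℝ x) x := by
  have hsq := (hasStrictFDerivAt_norm_sq x).hasFDerivAt.sqrt (by positivity)
  simp only [Real.sqrt_sq (norm_nonneg _)] at hsq
  convert hsq using 1
  ext v
  simp only [smul_apply, coe_innerSL_apply, smul_eq_mul, nsmul_eq_mul, Nat.cast_ofNat]
  field_simp

theorem hasFDerivAt_radial {f : ℝ → ℝ} {f' : ℝ} {x : E} (hx : x ≠ 0) (hf : HasDerivAt f f' ‖x‖) :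
    HasFDerivAt (fun y => f ‖y‖ • y)
      (f ‖x‖ • ContinuousLinearMap.id ℝ E + (f' / ‖x‖) • (innerSL ℝ x).smulRight x) x := by
  refine ((hf.comp_hasFDerivAt x (hasFDerivAt_norm hx)).smul (hasFDerivAt_id x)).congr_fderiv ?_
  ext v
  simp [div_eq_mul_inv, smul_smul]

end InnerProductSpace

theorem fderiv_radial_single_apply {d : ℕ} {f : ℝ → ℝ} {f' : ℝ}
    {x : EuclideanSpace ℝ (Fin d)} (hx : x ≠ 0) (hf : HasDerivAt f f' ‖x‖) (i j : Fin d) :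
    fderiv ℝ (fun y => f ‖y‖ • y) x (EuclideanSpace.single j 1) i
      = f ‖x‖ * (if i = j then 1 else 0) + f' / ‖x‖ * (x j * x i) := by
  rw [(hasFDerivAt_radial hx hf).fderiv]
  simp [EuclideanSpace.inner_single_right]

section QuadraticForm

variable {ι κ : Type*} [Fintype ι] [Fintype κ] [DecidableEq ι]

theorem sum_quadForm_scalar_add_rankOne (a : ι → κ → ℝ) (v : ι → ℝ) (p q : ℝ) :
    ∑ i, ∑ j, ∑ k, a j k * (p * (if i = j then 1 else 0) + q * (v j * v i)) * a i k
      = p * ∑ j, ∑ k, a j k ^ 2 + q * ∑ k, (∑ j, v j * a j k) ^ 2 := by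
  have hdiag : ∀ i, ∑ j, ∑ k, a j k * (p * (if i = j then 1 else 0)) * a i k
      = p * ∑ k, a i k ^ 2 := by
    intro i
    simp [Finset.mul_sum, sq, mul_comm, mul_left_comm]
  have hrank : ∀ k, ∑ i, ∑ j, a j k * (q * (v j * v i)) * a i k
      = q * (∑ j, v j * a j k) ^ 2 := by
    intro k
    rw [sq, Finset.sum_mul_sum, Finset.mul_sum, Finset.sum_comm]
    simp only [Finset.mul_sum]
    exact Finset.sum_congr rfl fun _ _ => Finset.sum_congr rfl fun _ _ => by ring
  simp only [mul_add, add_mul, Finset.sum_add_distrib, hdiag, ← Finset.mul_sum]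
  congr 1
  rw [Finset.mul_sum, ← Finset.sum_congr rfl fun k _ => hrank k, Finset.sum_comm (γ := κ)]
  exact Finset.sum_congr rfl fun _ _ => Finset.sum_comm

theorem mul_sum_sq_le_sum_quadForm_scalar_add_rankOne (a : ι → κ → ℝ) (v : ι → ℝ) (p : ℝ)
    {q : ℝ} (hq : q ≤ 0) :
    (p + q * ∑ j, v j ^ 2) * ∑ j, ∑ k, a j k ^ 2
      ≤ ∑ i, ∑ j, ∑ k, a j k * (p * (if i = j then 1 else 0) + q * (v j * v i)) * a i k := by
  have hCS : ∑ k, (∑ j, v j * a j k) ^ 2 ≤ (∑ j, v j ^ 2) * ∑ j, ∑ k, a j k ^ 2 := by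
    rw [Finset.sum_comm (f := fun j k => a j k ^ 2), Finset.mul_sum]
    exact Finset.sum_le_sum fun k _ => Finset.sum_mul_sq_le_sq_mul_sq _ _ _
  rw [sum_quadForm_scalar_add_rankOne]
  nlinarith [mul_le_mul_of_nonpos_left hCS hq]

end QuadraticForm

theorem mul_sum_sq_le_sum_fderiv_radial {d : ℕ} {κ : Type*} [Fintype κ] {f : ℝ → ℝ} {f' : ℝ}
    {x : EuclideanSpace ℝ (Fin d)} (hx : x ≠ 0) (hf : HasDerivAt f f' ‖x‖) (hf' : f' ≤ 0)
    (a : Fin d → κ → ℝ) :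
    (f ‖x‖ + ‖x‖ * f') * ∑ j, ∑ k, a j k ^ 2
      ≤ ∑ i, ∑ j, ∑ k,
          a j k * fderiv ℝ (fun y => f ‖y‖ • y) x (EuclideanSpace.single j 1) i * a i k := by
  have hnorm : ∑ j, x j ^ 2 = ‖x‖ ^ 2 := by
    simp [EuclideanSpace.norm_sq_eq]
  simp only [fderiv_radial_single_apply hx hf]
  convert mul_sum_sq_le_sum_quadForm_scalar_add_rankOne a (fun j => x j) (f ‖x‖)
    (div_nonpos_of_nonpos_of_nonneg hf' (norm_nonneg x)) using 2
  rw [hnorm]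
  field_simp [norm_ne_zero_iff.2 hx]

theorem phi_hasDerivAt_nonpos {b₀ R lam r : ℝ} (hc : 0 ≤ b₀ * R / lam) (hr : 0 < r)
    (hrR : r ≠ R / lam) : ∃ φ' ≤ 0, HasDerivAt (phi b₀ R lam) φ' r := by
  rcases hrR.lt_or_gt with h | h
  · refine ⟨0, le_rfl, (hasDerivAt_const r b₀).congr_of_eventuallyEq ?_⟩
    filter_upwards [Iio_mem_nhds h] with s hs using if_pos hs.le
  · refine ⟨b₀ * R / lam * -(r ^ 2)⁻¹,
      mul_nonpos_of_nonneg_of_nonpos hc (neg_nonpos.2 (by positivity)),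
      ((hasDerivAt_inv hr.ne').const_mul _).congr_of_eventuallyEq ?_⟩
    filter_upwards [Ioi_mem_nhds h] with s hs
    rw [phi, if_neg (not_le.2 hs), ← div_div, div_eq_mul_inv]

theorem ae_norm_ne {E : Type*} [NormedAddCommGroup E] [NormedSpace ℝ E] [MeasurableSpace E]
    [BorelSpace E] [FiniteDimensional ℝ E] [Nontrivial E] (μ : Measure E) [μ.IsAddHaarMeasure]
    (r : ℝ) : ∀ᵐ x ∂μ, ‖x‖ ≠ r := by
  filter_upwards [measure_eq_zero_iff_ae_notMem.1 (Measure.addHaar_sphere μ 0 r)] with x hx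
  rwa [mem_sphere_zero_iff_norm] at hx

theorem stmt10_general (d : ℕ) (hd : 1 ≤ d) (b₀ R lam : ℝ) (hb : 0 < b₀) (hR : 0 < R)
    (hl : 0 < lam)
    (w : EuclideanSpace ℝ (Fin d) → EuclideanSpace ℝ (Fin d))
    (hint1 : Integrable (fun x => ∑ i, ∑ j, ∑ k,
      pd j (fun z => w z k) x *
        fderiv ℝ (hvec d b₀ R lam) x (EuclideanSpace.single j 1) i *
        pd i (fun z => w z k) x))
    (hint2 : Integrable (fun x =>
      (phi b₀ R lam ‖x‖ + ‖x‖ * deriv (phi b₀ R lam) ‖x‖) *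
        ∑ j, ∑ k, (pd j (fun z => w z k) x) ^ 2)) :
    ∫ x, (phi b₀ R lam ‖x‖ + ‖x‖ * deriv (phi b₀ R lam) ‖x‖) *
        (∑ j, ∑ k, (pd j (fun z => w z k) x) ^ 2)
      ≤ ∫ x, ∑ i, ∑ j, ∑ k,
          pd j (fun z => w z k) x *
            fderiv ℝ (hvec d b₀ R lam) x (EuclideanSpace.single j 1) i *
            pd i (fun z => w z k) x := by
  have : Nonempty (Fin d) := ⟨⟨0, hd⟩⟩
  refine integral_mono_ae hint2 hint1 ?_
  filter_upwards [ae_norm_ne volume 0, ae_norm_ne volume (R / lam)] with x hx0 hxR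
  have hx : x ≠ 0 := norm_ne_zero_iff.1 hx0
  obtain ⟨φ', hφ', hφ⟩ := phi_hasDerivAt_nonpos (by positivity) (norm_pos_iff.2 hx) hxR
  rw [hφ.deriv]
  exact mul_sum_sq_le_sum_fderiv_radial hx hφ hφ' _

/-- `∑_{i,j,k} ∫ ∂_j w^k ∂_j h^i ∂_i w^k dx ≥ ∫ (φ(|x|)+|x|φ'(|x|)) |∇w|² dx`. -/
theorem stmt10 (d : ℕ) (hd : 1 ≤ d) (b₀ R lam : ℝ) (hb : 0 < b₀) (hR : 0 < R)
    (hl : 0 < lam)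
    (w : EuclideanSpace ℝ (Fin d) → EuclideanSpace ℝ (Fin d))
    (hw : ContDiff ℝ 1 w)
    (hint1 : Integrable (fun x => ∑ i, ∑ j, ∑ k,
      pd j (fun z => w z k) x *
        fderiv ℝ (hvec d b₀ R lam) x (EuclideanSpace.single j 1) i *
        pd i (fun z => w z k) x))
    (hint2 : Integrable (fun x =>
      (phi b₀ R lam ‖x‖ + ‖x‖ * deriv (phi b₀ R lam) ‖x‖) *
        ∑ j, ∑ k, (pd j (fun z => w z k) x) ^ 2)) :
    ∫ x, (phi b₀ R lam ‖x‖ + ‖x‖ * deriv (phi b₀ R lam) ‖x‖) *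
        (∑ j, ∑ k, (pd j (fun z => w z k) x) ^ 2)
      ≤ ∫ x, ∑ i, ∑ j, ∑ k,
          pd j (fun z => w z k) x *
            fderiv ℝ (hvec d b₀ R lam) x (EuclideanSpace.single j 1) i *
            pd i (fun z => w z k) x :=
  stmt10_general d hd b₀ R lam hb hR hl w hint1 hint2
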